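/- Let λ : n_b → ℝ, let F_k = exp(j·θ_k), and for n ∈ n_b define the n-th component of the magnitude gradient of the weighted power injection, U_n(v) := λ_n·F_n·conj(I_n) + conj(F_n)·Σ_i λ_i·V_i·conj(Y_{i n}) (this equals Σ_i λ_i·∂S_i/∂v_n). Then for all m, n ∈ n_b, the partial derivative of U_n with respect to the voltage magnitude v_m exists and equals λ_n·F_n·conj(Y_{n m})·conj(F_m) + λ_m·F_m·conj(Y_{m n})·conj(F_n); this is the (m, n) entry of the magnitude–magnitude Hessian diag(v)⁻¹·( diag(λ)·diag(V)·conj(Y)·diag(conj(V)) + diag(conj(V))·conj(Y)ᵀ·diag(V)·diag(λ) )·diag(v)⁻¹. -/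

import Mathlib

open Matrix

/-- Complex bus voltage `V_k = v_k · exp(j θ_k)`. -/
noncomputable def busV {nb : Type*} (v θ : nb → ℝ) (k : nb) : ℂ :=
  (v k : ℂ) * Complex.exp (Complex.I * (θ k : ℂ))

/-- Bus current injection `I_i = Σ_k Y_{i k} V_k`. -/
noncomputable def busI {nb : Type*} [Fintype nb] (Y : Matrix nb nb ℂ)
    (v θ : nb → ℝ) (i : nb) : ℂ :=
  ∑ k, Y i k * busV v θ k

/-- `n`-th component of the magnitude gradient of the `λ`-weighted power
injection: `U_n(v) = λ_n F_n conj(I_n) + conj(F_n) Σ_i λ_i V_i conj(Y_{i n})`,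
where `F_k = exp(j θ_k)`. -/
noncomputable def gradVU {nb : Type*} [Fintype nb] (Y : Matrix nb nb ℂ)
    (lam : nb → ℝ) (v θ : nb → ℝ) (n : nb) : ℂ :=
  (lam n : ℂ) * Complex.exp (Complex.I * (θ n : ℂ)) * (starRingEnd ℂ) (busI Y v θ n)
    + (starRingEnd ℂ) (Complex.exp (Complex.I * (θ n : ℂ))) *
        ∑ i, (lam i : ℂ) * busV v θ i * (starRingEnd ℂ) (Y i n)

/-! Moving `v_m` changes only `V_m = v_m F_m`, linearly with slope `F_m`. Hence `I_n` has slope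
`Y_{n m} F_m` and the weighted sum `Σ_i λ_i V_i conj(Y_{i n})` has slope `λ_m F_m conj(Y_{m n})`;
`U_n` combines the conjugate of the first with the second. -/

open Complex

section

variable {nb : Type*} [DecidableEq nb]

theorem hasDerivAt_busV_update (v θ : nb → ℝ) (m k : nb) :
    HasDerivAt (fun t : ℝ => busV (Function.update v m t) θ k)
      (if k = m then exp (I * θ m) else 0) (v m) := by
  unfold busV
  by_cases hk : k = m
  · subst hk
    simpa using (ofRealCLM.hasDerivAt (x := v k)).mul_const (exp (I * θ k))
  · simpa only [Function.update_of_ne hk, if_neg hk] using hasDerivAt_const (v m) _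

theorem hasDerivAt_sum_mul_busV_update [Fintype nb] (a b : nb → ℂ) (v θ : nb → ℝ) (m : nb) :
    HasDerivAt (fun t : ℝ => ∑ k, a k * busV (Function.update v m t) θ k * b k)
      (a m * exp (I * θ m) * b m) (v m) := by
  simpa [mul_ite, ite_mul] using HasDerivAt.fun_sum fun k (_ : k ∈ Finset.univ) =>
    ((hasDerivAt_busV_update v θ m k).const_mul (a k)).mul_const (b k)

theorem hasDerivAt_busI_update [Fintype nb] (Y : Matrix nb nb ℂ) (v θ : nb → ℝ) (m i : nb) :
    HasDerivAt (fun t : ℝ => busI Y (Function.update v m t) θ i)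
      (Y i m * exp (I * θ m)) (v m) := by
  simpa [busI] using hasDerivAt_sum_mul_busV_update (Y i) 1 v θ m

end

theorem hasDerivAt_gradVU_magnitude_general {nb : Type*} [Fintype nb] [DecidableEq nb]
    (Y : Matrix nb nb ℂ) (lam : nb → ℝ) (v θ : nb → ℝ)
    (m n : nb) :
    HasDerivAt (fun t : ℝ => gradVU Y lam (Function.update v m t) θ n)
      ((lam n : ℂ) * Complex.exp (Complex.I * (θ n : ℂ)) *
          (starRingEnd ℂ) (Y n m) *
          (starRingEnd ℂ) (Complex.exp (Complex.I * (θ m : ℂ)))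
        + (lam m : ℂ) * Complex.exp (Complex.I * (θ m : ℂ)) *
            (starRingEnd ℂ) (Y m n) *
            (starRingEnd ℂ) (Complex.exp (Complex.I * (θ n : ℂ))))
      (v m) := by
  have hI := (hasDerivAt_busI_update Y v θ m n).star.const_mul (lam n * exp (I * θ n))
  have hS := (hasDerivAt_sum_mul_busV_update (fun i => (lam i : ℂ))
    (fun i => starRingEnd ℂ (Y i n)) v θ m).const_mul (starRingEnd ℂ (exp (I * θ n)))
  refine (hI.add hS).congr_deriv ?_
  simp only [star_mul', Complex.star_def]
  ring

/-- The `(m, n)` entry of the magnitude–magnitude Hessian: partial derivative of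
`U_n` with respect to the voltage magnitude `v_m`. -/
theorem hasDerivAt_gradVU_magnitude {nb : Type*} [Fintype nb] [DecidableEq nb]
    (Y : Matrix nb nb ℂ) (lam : nb → ℝ) (v θ : nb → ℝ)
    (hv : ∀ k, v k ≠ 0) (m n : nb) :
    HasDerivAt (fun t : ℝ => gradVU Y lam (Function.update v m t) θ n)
      ((lam n : ℂ) * Complex.exp (Complex.I * (θ n : ℂ)) *
          (starRingEnd ℂ) (Y n m) *
          (starRingEnd ℂ) (Complex.exp (Complex.I * (θ m : ℂ)))
        + (lam m : ℂ) * Complex.exp (Complex.I * (θ m : ℂ)) *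
            (starRingEnd ℂ) (Y m n) *
            (starRingEnd ℂ) (Complex.exp (Complex.I * (θ n : ℂ))))
      (v m) :=
  hasDerivAt_gradVU_magnitude_general Y lam v θ m n
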